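/- Let a ≥ 1. The subgroup of ℤ generated by all products C(2^a, n₁)·C(2^a, n₂)⋯C(2^a, n_m)·2^{n₁+⋯+n_m−1}, where m ≥ 1, each nⱼ ≥ 1, and n₁+⋯+n_m ≥ 2, equals 2^a ℤ. -/

import Mathlib

/-!
Every generator is divisible by `2^a`: already `C(2^a, n₁) * 2^(n₁ - 1)` is, because
`n * C(2^a, n) = 2^a * C(2^a - 1, n - 1)` and the `2`-adic valuation of `n` is less than `n`.
Conversely the generators `2^(2a+1)` (from `n = (1, 1)`) and `2^a (2^a - 1)` (from `n = (2)`)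
have gcd `2^a`, as `2^a - 1` is odd once `a ≥ 1`.
-/

namespace Nat

theorem dvd_choose_mul_self (m : ℕ) {n : ℕ} (hn : n ≠ 0) : m ∣ m.choose n * n := by
  obtain ⟨k, rfl⟩ := exists_eq_succ_of_ne_zero hn
  cases m with
  | zero => simp
  | succ m => exact Dvd.intro _ (add_one_mul_choose_eq m k)

theorem Prime.pow_dvd_pow_pred_mul_of_dvd_mul {p a n x : ℕ} (hp : p.Prime) (hn : n ≠ 0)
    (h : p ^ a ∣ n * x) : p ^ a ∣ p ^ (n - 1) * x := by
  have hcop : Coprime (p ^ a) (ordCompl[p] n) := (coprime_ordCompl hp hn).pow_left a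
  have hproj : p ^ a ∣ ordCompl[p] n * (ordProj[p] n * x) := by
    rwa [← mul_assoc, mul_comm _ (ordProj[p] n), ordProj_mul_ordCompl_eq_self]
  have hle : n.factorization p ≤ n - 1 := le_sub_one_of_lt (factorization_lt p hn)
  exact (hcop.dvd_of_dvd_mul_left hproj).trans (mul_dvd_mul_right (pow_dvd_pow p hle) x)

theorem Prime.pow_dvd_choose_mul_pow_pred {p : ℕ} (hp : p.Prime) (a : ℕ) {n : ℕ}
    (hn : n ≠ 0) :
    p ^ a ∣ (p ^ a).choose n * p ^ (n - 1) := by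
  rw [mul_comm]
  exact hp.pow_dvd_pow_pred_mul_of_dvd_mul hn (mul_comm n _ ▸ dvd_choose_mul_self _ hn)

theorem Prime.pow_dvd_prod_choose_mul_pow_pred {p : ℕ} (hp : p.Prime) (a : ℕ) {k : ℕ}
    (n : Fin (k + 1) → ℕ) (hn : n 0 ≠ 0) :
    p ^ a ∣ (∏ j, (p ^ a).choose (n j)) * p ^ ((∑ j, n j) - 1) := by
  have hexp : (∑ j, n j) - 1 = (n 0 - 1) + ∑ j : Fin k, n j.succ := by
    rw [Fin.sum_univ_succ]; omega
  rw [Fin.prod_univ_succ, hexp, pow_add, mul_mul_mul_comm]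
  exact (hp.pow_dvd_choose_mul_pow_pred a hn).mul_right _

end Nat

theorem Int.natCast_mul_sub_one_eq_choose_two_mul_two (m : ℕ) :
    (m : ℤ) * (m - 1) = (m.choose 2 : ℤ) * 2 := by
  cases m with
  | zero => simp
  | succ N =>
    have h : (N + 1).choose 2 * 2 = (N + 1) * N := by
      simpa using (Nat.add_one_mul_choose_eq N 1).symm
    zify at h
    rw [h]
    push_cast
    ring

theorem stmt_9 (a : ℕ) (ha : 1 ≤ a) :
    AddSubgroup.closure {z : ℤ | ∃ (m : ℕ) (n : Fin m → ℕ), 1 ≤ m ∧ (∀ j, 1 ≤ n j) ∧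
        2 ≤ ∑ j, n j ∧
        z = (∏ j, ((2 ^ a).choose (n j) : ℤ)) * 2 ^ ((∑ j, n j) - 1)} =
      AddSubgroup.zmultiples ((2 : ℤ) ^ a) := by
  apply le_antisymm
  · rw [AddSubgroup.closure_le]
    rintro z ⟨_ | k, n, hm, hn, -, rfl⟩
    · omega
    have hdvd :=
      Nat.prime_two.pow_dvd_prod_choose_mul_pow_pred a n (Nat.one_le_iff_ne_zero.mp (hn 0))
    rw [SetLike.mem_coe, Int.mem_zmultiples_iff]
    exact_mod_cast Int.natCast_dvd_natCast.mpr hdvd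
  · rw [AddSubgroup.zmultiples_le]
    set S := {z : ℤ | ∃ (m : ℕ) (n : Fin m → ℕ), 1 ≤ m ∧ (∀ j, 1 ≤ n j) ∧
        2 ≤ ∑ j, n j ∧ z = (∏ j, ((2 ^ a).choose (n j) : ℤ)) * 2 ^ ((∑ j, n j) - 1)}
    have hpair : (2 : ℤ) ^ (2 * a + 1) ∈ S :=
      ⟨2, ![1, 1], by norm_num, by simp [Fin.forall_fin_two], by simp,
        by norm_num [Fin.sum_univ_two, pow_succ, two_mul, pow_add]⟩
    have hsingle : (2 : ℤ) ^ a * (2 ^ a - 1) ∈ S :=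
      ⟨1, ![2], le_rfl, by simp, by simp, by
        simpa using Int.natCast_mul_sub_one_eq_choose_two_mul_two (2 ^ a)⟩
    have hcomb : (2 : ℤ) ^ a =
        2 ^ (a - 1) * 2 ^ (2 * a + 1) - (2 ^ a + 1) * (2 ^ a * (2 ^ a - 1)) := by
      obtain ⟨b, rfl⟩ := Nat.exists_eq_add_of_le' ha
      simp only [Nat.add_sub_cancel]
      ring
    rw [hcomb, ← smul_eq_mul, ← smul_eq_mul]
    exact sub_mem (zsmul_mem (AddSubgroup.subset_closure hpair) _)
      (zsmul_mem (AddSubgroup.subset_closure hsingle) _)
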